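/- arXiv:2005.09882 — 4 statements merged into one kernel-verified Lean document; each statement's English description precedes it below -/
import Mathlib

section
/- For fixed τ, σ̄, σ_r, σ_f, e⁰, γ₁, γ₂ with σ̄ > max(σ_r, σ_f), γ₁ ∈ (0,1), e⁰(1−γ₁) > γ₂ > 0, the function F(v) = vγ₂/(v²/τ − σ_r) + v(e⁰(1−γ₁) − γ₂)/(v²/τ − σ̄) + ve⁰γ₁/(v²/τ − σ_f) is strictly decreasing on (sqrt(σ̄τ), ∞) and tends to +∞ as v → sqrt(σ̄τ)⁺ and to 0 as v → ∞; hence for each d > 0 there is a unique v̄ > sqrt(σ̄τ) with F(v̄) = d. -/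
/-!
Each of the three summands has the shape `v γ / (v²/τ - c)` with `γ > 0` and `0 ≤ c ≤ σ̄`
(positivity of the third weight `e⁰γ₁` comes from `e⁰(1 - γ₁) > γ₂ > 0`).
Such a term is strictly decreasing where its denominator is positive, since
`a γ (b²/τ - c) - b γ (a²/τ - c) = γ (b - a)(ab/τ + c) > 0` for `0 < a < b`; it decays like
`γ τ / v` at infinity, and it blows up only at the zero `√(cτ)` of its denominator, which for
`c < σ̄` lies left of `√(σ̄τ)`. The sum is thus a continuous strictly decreasing bijection from
`(√(σ̄τ), ∞)` onto `(0, ∞)`, by the intermediate value theorem.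
-/

open Filter Set Topology

/-- Distance run at velocity `v` while the energy balance `e' = c - v²/τ` consumes energy `γ`. -/
noncomputable def phaseDist (τ c γ v : ℝ) : ℝ := v * γ / (v ^ 2 / τ - c)

section PhaseDist

variable {τ c γ : ℝ}

lemma sub_pos_of_sqrt_mul_lt (hτ : 0 < τ) {v : ℝ} (hv : √(c * τ) < v) : 0 < v ^ 2 / τ - c := by
  have hv0 : 0 < v := (Real.sqrt_nonneg _).trans_lt hv
  rw [Real.sqrt_lt' hv0] at hv
  rw [sub_pos, lt_div_iff₀ hτ]
  exact hv

lemma continuousOn_phaseDist (hτ : 0 < τ) : ContinuousOn (phaseDist τ c γ) (Ioi √(c * τ)) :=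
  ContinuousOn.div (by fun_prop) (by fun_prop) fun _ hv => (sub_pos_of_sqrt_mul_lt hτ hv).ne'

lemma strictAntiOn_phaseDist (hτ : 0 < τ) (hc : 0 ≤ c) (hγ : 0 < γ) :
    StrictAntiOn (phaseDist τ c γ) (Ioi √(c * τ)) := by
  intro a ha b hb hab
  have ha0 : 0 < a := (Real.sqrt_nonneg _).trans_lt ha
  have hb0 : 0 < b := (Real.sqrt_nonneg _).trans_lt hb
  have hda := sub_pos_of_sqrt_mul_lt hτ ha
  have hdb := sub_pos_of_sqrt_mul_lt hτ hb
  rw [phaseDist, phaseDist, div_lt_div_iff₀ hdb hda]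
  have hcross : a * γ * (b ^ 2 / τ - c) - b * γ * (a ^ 2 / τ - c)
      = γ * ((b - a) * (a * b / τ + c)) := by
    field_simp; ring
  have hpos : 0 < γ * ((b - a) * (a * b / τ + c)) := by
    have : 0 < a * b / τ := by positivity
    exact mul_pos hγ (mul_pos (sub_pos.mpr hab) (by linarith))
  linarith

lemma tendsto_phaseDist_atTop (hτ : 0 < τ) : Tendsto (phaseDist τ c γ) atTop (𝓝 0) := by
  have hden : Tendsto (fun v : ℝ => v / τ - c / v) atTop atTop := by
    simpa only [sub_eq_add_neg, neg_zero, add_zero, id_eq] using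
      (tendsto_id.atTop_div_const hτ).atTop_add (tendsto_const_nhds.div_atTop tendsto_id).neg
  refine ((tendsto_const_nhds (x := γ)).div_atTop hden).congr' ?_
  filter_upwards [eventually_gt_atTop (0 : ℝ)] with v hv
  rw [phaseDist, ← mul_div_mul_left γ _ hv.ne']
  congr 1
  field_simp

lemma tendsto_phaseDist_nhdsGT_sqrt (hτ : 0 < τ) (hc : 0 < c) (hγ : 0 < γ) :
    Tendsto (phaseDist τ c γ) (𝓝[>] √(c * τ)) atTop := by
  set s := √(c * τ)
  have hs : 0 < s := Real.sqrt_pos.mpr (mul_pos hc hτ)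
  have hden : Tendsto (fun v : ℝ => v ^ 2 / τ - c) (𝓝[>] s) (𝓝[>] 0) := by
    refine tendsto_nhdsWithin_iff.mpr ⟨?_, ?_⟩
    · have hs2 : s ^ 2 / τ - c = 0 := by
        rw [Real.sq_sqrt (mul_pos hc hτ).le]; field_simp; ring
      exact tendsto_nhdsWithin_of_tendsto_nhds (hs2 ▸ (by fun_prop : Continuous _).tendsto s)
    · filter_upwards [self_mem_nhdsWithin] with v hv using sub_pos_of_sqrt_mul_lt hτ hv
  change Tendsto (fun v => v * γ / (v ^ 2 / τ - c)) _ _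
  simp only [div_eq_mul_inv]
  exact Tendsto.pos_mul_atTop (mul_pos hs hγ)
    (tendsto_nhdsWithin_of_tendsto_nhds ((by fun_prop : Continuous _).tendsto s))
    (tendsto_inv_nhdsGT_zero.comp hden)

end PhaseDist

lemma existsUnique_eq_of_strictAntiOn_Ioi {f : ℝ → ℝ} {a L d : ℝ}
    (hcont : ContinuousOn f (Ioi a)) (hanti : StrictAntiOn f (Ioi a))
    (hleft : Tendsto f (𝓝[>] a) atTop) (hinf : Tendsto f atTop (𝓝 L)) (hd : L < d) :
    ∃! v, a < v ∧ f v = d := by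
  obtain ⟨b, hfb, hb⟩ := ((hleft.eventually_gt_atTop d).and self_mem_nhdsWithin).exists
  obtain ⟨c, hfc, hbc⟩ := ((hinf.eventually_lt_const hd).and (eventually_gt_atTop b)).exists
  have hIcc : Icc b c ⊆ Ioi a := fun x hx => lt_of_lt_of_le hb hx.1
  obtain ⟨v, hv, hfv⟩ := intermediate_value_Icc' hbc.le (hcont.mono hIcc) ⟨hfc.le, hfb.le⟩
  refine ⟨v, ⟨hIcc hv, hfv⟩, fun w ⟨hw, hfw⟩ => ?_⟩
  exact hanti.injOn hw (hIcc hv) (hfw.trans hfv.symm)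

open Filter Set in
/-- The three-phase distance function
`F(v) = vγ₂/(v²/τ − σ_r) + v(e⁰(1−γ₁) − γ₂)/(v²/τ − σ̄) + ve⁰γ₁/(v²/τ − σ_f)`
is strictly decreasing on `(√(σ̄τ), ∞)`, tends to `+∞` at `√(σ̄τ)⁺` and to `0`
at `∞`; hence for each `d > 0` there is a unique `v̄ > √(σ̄τ)` with `F(v̄) = d`. -/
theorem distance_function_wellposed (τ σbar σr σf e0 γ1 γ2 : ℝ)
    (hτ : 0 < τ) (hσr : 0 ≤ σr) (hσf : 0 ≤ σf)
    (hσ1 : σr < σbar) (hσ2 : σf < σbar)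
    (hγ1 : 0 < γ1) (hγ1' : γ1 < 1) (hγ2 : 0 < γ2) (he : γ2 < e0 * (1 - γ1))
    (F : ℝ → ℝ)
    (hF : ∀ v : ℝ, F v = v * γ2 / (v ^ 2 / τ - σr)
      + v * (e0 * (1 - γ1) - γ2) / (v ^ 2 / τ - σbar)
      + v * e0 * γ1 / (v ^ 2 / τ - σf)) :
    StrictAntiOn F (Ioi (Real.sqrt (σbar * τ))) ∧
    Tendsto F (nhdsWithin (Real.sqrt (σbar * τ)) (Ioi (Real.sqrt (σbar * τ)))) atTop ∧
    Tendsto F atTop (nhds 0) ∧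
    ∀ d : ℝ, 0 < d → ∃! v : ℝ, Real.sqrt (σbar * τ) < v ∧ F v = d := by
  have hσbar : 0 < σbar := hσr.trans_lt hσ1
  have hγmid : 0 < e0 * (1 - γ1) - γ2 := sub_pos.mpr he
  have hγlast : 0 < e0 * γ1 := mul_pos (by nlinarith) hγ1
  have hFsum : F = phaseDist τ σr γ2 + phaseDist τ σbar (e0 * (1 - γ1) - γ2)
      + phaseDist τ σf (e0 * γ1) := by
    funext v; simp only [hF, Pi.add_apply, phaseDist, mul_assoc]
  have hsub : ∀ c ≤ σbar, Ioi √(σbar * τ) ⊆ Ioi √(c * τ) := fun c hc =>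
    Ioi_subset_Ioi (Real.sqrt_le_sqrt (mul_le_mul_of_nonneg_right hc hτ.le))
  have hnear : ∀ {c} γ, 0 ≤ c → c < σbar →
      Tendsto (phaseDist τ c γ) (𝓝[>] √(σbar * τ)) (𝓝 (phaseDist τ c γ √(σbar * τ))) :=
    fun γ hc₀ hc => ((continuousOn_phaseDist hτ).continuousAt (Ioi_mem_nhds
      (Real.sqrt_lt_sqrt (by positivity) (mul_lt_mul_of_pos_right hc hτ)))).tendsto.mono_left
      nhdsWithin_le_nhds
  have hcont : ContinuousOn F (Ioi √(σbar * τ)) := hFsum ▸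
    (((continuousOn_phaseDist hτ).mono (hsub _ hσ1.le)).add (continuousOn_phaseDist hτ)).add
      ((continuousOn_phaseDist hτ).mono (hsub _ hσ2.le))
  have hanti : StrictAntiOn F (Ioi √(σbar * τ)) := hFsum ▸
    (((strictAntiOn_phaseDist hτ hσr hγ2).mono (hsub _ hσ1.le)).add
      (strictAntiOn_phaseDist hτ hσbar.le hγmid)).add
      ((strictAntiOn_phaseDist hτ hσf hγlast).mono (hsub _ hσ2.le))
  have hleft : Tendsto F (𝓝[>] √(σbar * τ)) atTop := hFsum ▸
    ((hnear γ2 hσr hσ1).add_atTop (tendsto_phaseDist_nhdsGT_sqrt hτ hσbar hγmid)).atTop_add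
      (hnear _ hσf hσ2)
  have hinf : Tendsto F atTop (𝓝 0) := by
    simpa only [hFsum, Pi.add_def, add_zero] using
      ((tendsto_phaseDist_atTop hτ).add (tendsto_phaseDist_atTop hτ)).add
        (tendsto_phaseDist_atTop hτ)
  exact ⟨hanti, hleft, hinf, fun d hd =>
    existsUnique_eq_of_strictAntiOn_Ioi hcont hanti hleft hinf hd⟩
end

section
/- Let γ > 0, F_max > 0, p_f > 0 constant. The equation p_f γ (F_max − f)² − f = 0 has exactly two real roots f₁ > f₂ (with f₂ < F_max < f₁ or both below/above depending on parameters; in fact both roots are real and distinct since the discriminant (2p_fγF_max + 1)² − 4p_f²γ²F_max² = 4p_fγF_max + 1 > 0), and the ODE f'(t) = γ(p_fγ(F_max − f)² − f) with f(T) = f̄, f̄ strictly between f₁ and f₂, has the explicit solution f(t) = f₂ + (f₁ − f₂)/(1 − ((f̄ − f₁)/(f̄ − f₂))e^{μ(t−T)}) where μ = p_fγ²(f₁ − f₂). -/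
/-! With `a = p_f γ`, the quadratic `a (F_max − x)² − x` has discriminant `4 a F_max + 1 > 0`
and factors as `a (x − f₁)(x − f₂)`, so the ODE is the Riccati equation `f' = γ a (f − f₁)(f − f₂)`
with constant roots.  Its solutions between the roots are logistic curves
`f₂ + (f₁ − f₂) / (1 − r e^{k (f₁ − f₂)(t − T)})`, which one checks by differentiating;
`r = (f̄ − f₁)/(f̄ − f₂) ≤ 0` keeps the denominator positive and fixes `f(T) = f̄`. -/

open Real

theorem quadratic_eq_mul_sub_mul_sub {K : Type*} [Field K] [NeZero (2 : K)] {a b c s : K}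
    (ha : a ≠ 0) (h : discrim a b c = s * s) (x : K) :
    a * (x * x) + b * x + c = a * (x - (-b + s) / (2 * a)) * (x - (-b - s) / (2 * a)) := by
  rw [discrim] at h
  field_simp
  linear_combination -h

namespace RiccatiSigmoid

noncomputable def sigmoid (k f₁ f₂ r T t : ℝ) : ℝ :=
  f₂ + (f₁ - f₂) / (1 - r * exp (k * (f₁ - f₂) * (t - T)))

variable {k f₁ f₂ r T : ℝ}

theorem hasDerivAt_sigmoid {t : ℝ} (hD : 1 - r * exp (k * (f₁ - f₂) * (t - T)) ≠ 0) :
    HasDerivAt (sigmoid k f₁ f₂ r T)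
      (k * (sigmoid k f₁ f₂ r T t - f₁) * (sigmoid k f₁ f₂ r T t - f₂)) t := by
  have hexp : HasDerivAt (fun u => exp (k * (f₁ - f₂) * (u - T)))
      (exp (k * (f₁ - f₂) * (t - T)) * (k * (f₁ - f₂))) t := by
    simpa using (((hasDerivAt_id t).sub_const T).const_mul (k * (f₁ - f₂))).exp
  refine (((hasDerivAt_const t (f₁ - f₂)).div ((hexp.const_mul r).const_sub 1) hD).const_add
    f₂).congr_deriv ?_
  simp only [sigmoid]
  generalize exp (k * (f₁ - f₂) * (t - T)) = E at hD ⊢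
  field_simp
  ring

theorem one_sub_mul_exp_pos (hr : r ≤ 0) (t : ℝ) :
    0 < 1 - r * exp (k * (f₁ - f₂) * (t - T)) := by
  nlinarith [exp_pos (k * (f₁ - f₂) * (t - T))]

theorem sigmoid_self {fbar : ℝ} (h₁₂ : f₁ ≠ f₂) (hbar : fbar ≠ f₂) :
    sigmoid k f₁ f₂ ((fbar - f₁) / (fbar - f₂)) T T = fbar := by
  have h₁₂' : f₁ - f₂ ≠ 0 := sub_ne_zero.2 h₁₂
  have hbar' : fbar - f₂ ≠ 0 := sub_ne_zero.2 hbar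
  have hden : 1 - (fbar - f₁) / (fbar - f₂) = (f₁ - f₂) / (fbar - f₂) := by
    field_simp
    ring
  simp only [sigmoid, sub_self, mul_zero, exp_zero, mul_one, hden]
  field_simp
  ring

end RiccatiSigmoid

open RiccatiSigmoid in
/-- The equation `p_f γ (F_max − f)² − f = 0` has exactly two real roots
`f₁ > f₂`, and the Riccati ODE `f' = γ(p_fγ(F_max − f)² − f)` with `f(T) = f̄`,
`f̄` strictly between the roots, has the explicit sigmoid solution
`f(t) = f₂ + (f₁ − f₂)/(1 − ((f̄ − f₁)/(f̄ − f₂))e^{μ(t−T)})` with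
`μ = p_fγ²(f₁ − f₂)`. -/
theorem riccati_sigmoid (γ Fmax pf : ℝ) (hγ : 0 < γ) (hF : 0 < Fmax) (hpf : 0 < pf) :
    ∃ f1 f2 : ℝ, f2 < f1 ∧
      pf * γ * (Fmax - f1) ^ 2 - f1 = 0 ∧
      pf * γ * (Fmax - f2) ^ 2 - f2 = 0 ∧
      (∀ x : ℝ, pf * γ * (Fmax - x) ^ 2 - x = 0 → x = f1 ∨ x = f2) ∧
      ∀ T fbar : ℝ, f2 < fbar → fbar < f1 →
        ∀ f : ℝ → ℝ,
          (∀ t : ℝ, f t = f2 + (f1 - f2) /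
            (1 - (fbar - f1) / (fbar - f2) * Real.exp (pf * γ ^ 2 * (f1 - f2) * (t - T)))) →
          f T = fbar ∧
          ∀ t : ℝ, HasDerivAt f (γ * (pf * γ * (Fmax - f t) ^ 2 - f t)) t := by
  set a := pf * γ
  have ha : 0 < a := mul_pos hpf hγ
  have hdisc : 0 < 4 * a * Fmax + 1 := by positivity
  set s := √(4 * a * Fmax + 1)
  have hs : 0 < s := sqrt_pos.2 hdisc
  set f1 := (2 * a * Fmax + 1 + s) / (2 * a)
  set f2 := (2 * a * Fmax + 1 - s) / (2 * a)
  have hfactor (x : ℝ) : a * (Fmax - x) ^ 2 - x = a * (x - f1) * (x - f2) := by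
    have h := quadratic_eq_mul_sub_mul_sub (b := -(2 * a * Fmax + 1)) (c := a * Fmax ^ 2) ha.ne'
      (s := s) (by rw [discrim, mul_self_sqrt hdisc.le]; ring) x
    rw [neg_neg] at h
    linear_combination h
  have h21 : f2 < f1 := div_lt_div_of_pos_right (by linarith) (by positivity)
  refine ⟨f1, f2, h21, by rw [hfactor]; ring, by rw [hfactor]; ring, fun x hx => ?_, ?_⟩
  · rw [hfactor, mul_eq_zero, mul_eq_zero, sub_eq_zero, sub_eq_zero] at hx
    exact hx.imp_left (·.resolve_left ha.ne')
  · intro T fbar h2b hb1 f hf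
    have hf : f = sigmoid (pf * γ ^ 2) f1 f2 ((fbar - f1) / (fbar - f2)) T := funext hf
    refine ⟨hf ▸ sigmoid_self h21.ne' h2b.ne', fun t => ?_⟩
    have hr : (fbar - f1) / (fbar - f2) ≤ 0 :=
      div_nonpos_of_nonpos_of_nonneg (by linarith) (by linarith)
    rw [hfactor, hf]
    convert hasDerivAt_sigmoid (one_sub_mul_exp_pos hr t).ne' using 1
    ring
end

section
/- Let d, e⁰, σ̄, τ, g > 0 and let v̄(δ) = (e⁰ − dgδ)τ/(2d) + sqrt(σ̄τ + ((e⁰ − dgδ)τ/(2d))²) be the turnpike velocity on a track with constant slope δ. Then v̄(δ) is strictly decreasing in δ, and its derivative at δ = 0 equals −gτ/2 · (1 + (e⁰τ/(2d))/sqrt(σ̄τ + (e⁰τ/(2d))²)), so the first-order change in velocity for small slope δ is Δv = −gδτ(1/2 + (e⁰τ/(4d))/sqrt(σ̄τ + (e⁰τ/(2d))²)). -/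
/-!
Write `v̄ = F ∘ ℓ` with `ℓ(δ) = (e⁰ − dgδ)τ/(2d)`, an affine map of slope `−gτ/2`, and
`F(u) = u + √(c + u²)`, `c = σ̄τ > 0`. Since `|u| < √(c + u²)`, the derivative
`F'(u) = 1 + u/√(c + u²)` is positive, so `F` is strictly increasing and `v̄` strictly
decreasing; the chain rule at `δ = 0` gives the stated derivative.
-/

namespace Turnpike

variable {c : ℝ}

theorem neg_lt_sqrt_add_sq (hc : 0 < c) (u : ℝ) : -u < √(c + u ^ 2) :=
  calc -u ≤ |u| := neg_le_abs u
    _ = √(u ^ 2) := (Real.sqrt_sq_eq_abs u).symm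
    _ < √(c + u ^ 2) := Real.sqrt_lt_sqrt (sq_nonneg u) (by linarith)

theorem hasDerivAt_add_sqrt_add_sq (hc : 0 < c) (u : ℝ) :
    HasDerivAt (fun u => u + √(c + u ^ 2)) (1 + u / √(c + u ^ 2)) u := by
  have hpos : 0 < c + u ^ 2 := by positivity
  have hsqrt := ((hasDerivAt_pow 2 u).const_add c).sqrt hpos.ne'
  refine ((hasDerivAt_id' u).add hsqrt).congr_deriv ?_
  field_simp
  norm_num
  ring

theorem one_add_div_sqrt_add_sq_pos (hc : 0 < c) (u : ℝ) : 0 < 1 + u / √(c + u ^ 2) := by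
  have hsqrt : 0 < √(c + u ^ 2) := Real.sqrt_pos.mpr (by positivity)
  rw [← div_self hsqrt.ne', ← add_div]
  exact div_pos (by linarith [neg_lt_sqrt_add_sq hc u]) hsqrt

theorem strictMono_add_sqrt_add_sq (hc : 0 < c) : StrictMono (fun u => u + √(c + u ^ 2)) :=
  strictMono_of_hasDerivAt_pos (hasDerivAt_add_sqrt_add_sq hc) (one_add_div_sqrt_add_sq_pos hc)

end Turnpike

open Turnpike in
theorem slope_velocity_general (d e0 σbar τ g : ℝ)
    (hd : 0 < d) (hσ : 0 < σbar) (hτ : 0 < τ) (hg : 0 < g)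
    (vbar : ℝ → ℝ)
    (hv : ∀ δ : ℝ, vbar δ = (e0 - d * g * δ) * τ / (2 * d)
      + Real.sqrt (σbar * τ + ((e0 - d * g * δ) * τ / (2 * d)) ^ 2)) :
    StrictAnti vbar ∧
    HasDerivAt vbar
      (-(g * τ) / 2 * (1 + (e0 * τ / (2 * d))
        / Real.sqrt (σbar * τ + (e0 * τ / (2 * d)) ^ 2))) 0 := by
  set ℓ : ℝ → ℝ := fun δ => (e0 - d * g * δ) * τ / (2 * d)
  have hc : 0 < σbar * τ := mul_pos hσ hτ
  have hvbar : vbar = (fun u => u + √(σbar * τ + u ^ 2)) ∘ ℓ := funext hv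
  have hℓ (δ : ℝ) : HasDerivAt ℓ (-(g * τ) / 2) δ := by
    have hlin := ((hasDerivAt_id' δ).const_mul (d * g)).const_sub e0
    refine ((hlin.mul_const τ).div_const (2 * d)).congr_deriv ?_
    field_simp
  refine ⟨?_, ?_⟩
  · have hℓ_anti : StrictAnti ℓ :=
      strictAnti_of_hasDerivAt_neg hℓ fun _ => by linarith [mul_pos hg hτ]
    rw [hvbar]
    exact (strictMono_add_sqrt_add_sq hc).comp_strictAnti hℓ_anti
  · rw [hvbar]
    refine ((hasDerivAt_add_sqrt_add_sq hc (ℓ 0)).comp 0 (hℓ 0)).congr_deriv ?_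
    simp only [ℓ, mul_zero, sub_zero]
    ring

/-- The turnpike velocity on a track with constant slope `δ`,
`v̄(δ) = (e⁰ − dgδ)τ/(2d) + √(σ̄τ + ((e⁰ − dgδ)τ/(2d))²)`, is strictly decreasing
in `δ`, and its derivative at `δ = 0` equals
`−gτ/2 · (1 + (e⁰τ/(2d))/√(σ̄τ + (e⁰τ/(2d))²))`. -/
theorem slope_velocity (d e0 σbar τ g : ℝ)
    (hd : 0 < d) (he0 : 0 < e0) (hσ : 0 < σbar) (hτ : 0 < τ) (hg : 0 < g)
    (vbar : ℝ → ℝ)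
    (hv : ∀ δ : ℝ, vbar δ = (e0 - d * g * δ) * τ / (2 * d)
      + Real.sqrt (σbar * τ + ((e0 - d * g * δ) * τ / (2 * d)) ^ 2)) :
    StrictAnti vbar ∧
    HasDerivAt vbar
      (-(g * τ) / 2 * (1 + (e0 * τ / (2 * d))
        / Real.sqrt (σbar * τ + (e0 * τ / (2 * d)) ^ 2))) 0 :=
  slope_velocity_general d e0 σbar τ g hd hσ hτ hg vbar hv
end

section
/- Let 0 < f̄ < F_max, γ, λ > 0, and set μ = γλF_max, c = F_max/f̄ − 1 > 0. Then ∫₀^T (F_max/(1 + ce^{−μt}))² e^{−At} dt is continuous and strictly increasing in λ for each fixed T > 0, A > 0, with limit (as λ → ∞) equal to F_max²(1 − e^{−AT})/A and limit (as λ → 0⁺) equal to f̄²(1 − e^{−AT})/A. Hence for any target value α strictly between f̄²(1−e^{−AT})/A and F_max²(1−e^{−AT})/A there exists a unique λ > 0 achieving ∫₀^T f(t)²e^{−At}dt = α. -/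
/-!
With `c = F_max/f̄ - 1 > 0` the integrand is `φ(e^{-γ F_max λ t}) e^{-At}`, where
`φ(x) = (F_max/(1 + c x))²` is strictly decreasing on `[0, ∞)` with `φ(0) = F_max²` and
`φ(1) = f̄²`. For `t > 0` the inner exponential decreases strictly in `λ`, from `1` at `λ = 0⁺`
to `0` as `λ → ∞`, so the integral is strictly increasing; since `φ` is bounded on `[0, 1]`,
dominated convergence gives continuity and both limits. The intermediate value theorem then
yields the multiplier, and strict monotonicity its uniqueness.
-/

open Filter Set Topology MeasureTheory

theorem existsUnique_eq_of_strictMonoOn_of_tendsto {f : ℝ → ℝ} {a L U α : ℝ}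
    (hcont : ContinuousOn f (Ioi a)) (hmono : StrictMonoOn f (Ioi a))
    (hL : Tendsto f (𝓝[>] a) (𝓝 L)) (hU : Tendsto f atTop (𝓝 U)) (hLα : L < α) (hαU : α < U) :
    ∃! x, a < x ∧ f x = α := by
  obtain ⟨x₁, hx₁, hx₁a⟩ := ((hL.eventually_lt_const hLα).and self_mem_nhdsWithin).exists
  obtain ⟨x₂, hx₂, hx₁₂⟩ := ((hU.eventually_const_lt hαU).and (eventually_gt_atTop x₁)).exists
  obtain ⟨x, hx, hfx⟩ := intermediate_value_Icc hx₁₂.le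
    (hcont.mono (Icc_subset_Ioi_iff hx₁₂.le |>.2 hx₁a)) ⟨hx₁.le, hx₂.le⟩
  have hxa : a < x := hx₁a.trans_le hx.1
  exact ⟨x, ⟨hxa, hfx⟩, fun y ⟨hya, hfy⟩ => hmono.injOn hya hxa (hfy.trans hfx.symm)⟩

theorem integral_exp_neg_mul (A T : ℝ) (hA : A ≠ 0) :
    ∫ t in (0:ℝ)..T, Real.exp (-A * t) = (1 - Real.exp (-A * T)) / A := by
  rw [intervalIntegral.integral_comp_mul_left Real.exp (neg_ne_zero.2 hA), integral_exp]
  simp only [mul_zero, Real.exp_zero, smul_eq_mul]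
  field_simp
  ring

noncomputable def expProfileIntegral (φ w : ℝ → ℝ) (T κ lam : ℝ) : ℝ :=
  ∫ t in (0:ℝ)..T, φ (Real.exp (-(κ * lam) * t)) * w t

section ExpProfile

variable {φ w : ℝ → ℝ} {T κ : ℝ}

theorem continuous_comp_exp_mul (hφ : ContinuousOn φ (Ici 0)) (hw : Continuous w) (κ lam : ℝ) :
    Continuous fun t => φ (Real.exp (-(κ * lam) * t)) * w t :=
  (hφ.comp_continuous (by fun_prop) fun _ => (Real.exp_pos _).le).mul hw

theorem exp_mem_Icc_zero_one {κ lam t : ℝ} (hκ : 0 ≤ κ) (hlam : 0 ≤ lam) (ht : 0 ≤ t) :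
    Real.exp (-(κ * lam) * t) ∈ Icc 0 1 :=
  ⟨(Real.exp_pos _).le, Real.exp_le_one_iff.2 (by nlinarith [mul_nonneg hκ hlam])⟩

theorem tendsto_expProfileIntegral {l : Filter ℝ} [l.IsCountablyGenerated] {ξ : ℝ → ℝ}
    (hφ : ContinuousOn φ (Ici 0)) (hw : Continuous w) (hκ : 0 ≤ κ) (hT : 0 ≤ T)
    (hl : ∀ᶠ lam in l, 0 ≤ lam) (hξ : ∀ t ∈ Ioc 0 T, 0 ≤ ξ t)
    (hlim : ∀ t ∈ Ioc 0 T, Tendsto (fun lam => Real.exp (-(κ * lam) * t)) l (𝓝 (ξ t))) :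
    Tendsto (expProfileIntegral φ w T κ) l (𝓝 (∫ t in (0:ℝ)..T, φ (ξ t) * w t)) := by
  obtain ⟨M, hM⟩ := (isCompact_Icc (a := (0:ℝ)) (b := 1)).exists_bound_of_continuousOn
    (hφ.mono Icc_subset_Ici_self)
  refine intervalIntegral.tendsto_integral_filter_of_dominated_convergence (fun t => M * ‖w t‖)
    (.of_forall fun lam => (continuous_comp_exp_mul hφ hw κ lam).aestronglyMeasurable) ?_
    ((by fun_prop : Continuous fun t => M * ‖w t‖).intervalIntegrable 0 T) ?_
  · filter_upwards [hl] with lam hlam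
    refine ae_of_all _ fun t ht => ?_
    rw [uIoc_of_le hT] at ht
    rw [norm_mul]
    exact mul_le_mul_of_nonneg_right (hM _ (exp_mem_Icc_zero_one hκ hlam ht.1.le)) (norm_nonneg _)
  · refine ae_of_all _ fun t ht => ?_
    rw [uIoc_of_le hT] at ht
    refine ((hφ (ξ t) (hξ t ht)).tendsto.comp ?_).mul_const (w t)
    exact tendsto_nhdsWithin_iff.2 ⟨hlim t ht, .of_forall fun _ => (Real.exp_pos _).le⟩

theorem continuousOn_expProfileIntegral (hφ : ContinuousOn φ (Ici 0)) (hw : Continuous w)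
    (hκ : 0 ≤ κ) (hT : 0 ≤ T) : ContinuousOn (expProfileIntegral φ w T κ) (Ioi 0) :=
  fun lam₀ hlam₀ => ContinuousAt.continuousWithinAt <|
    tendsto_expProfileIntegral hφ hw hκ hT
      (eventually_gt_nhds hlam₀ |>.mono fun _ h => h.le) (fun _ _ => (Real.exp_pos _).le)
      fun t _ => (by fun_prop : Continuous fun lam => Real.exp (-(κ * lam) * t)).tendsto _

theorem strictMono_expProfileIntegral (hφc : ContinuousOn φ (Ici 0))
    (hφ : StrictAntiOn φ (Ici 0)) (hw : Continuous w) (hw_pos : ∀ t ∈ Ioc 0 T, 0 < w t)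
    (hκ : 0 < κ) (hT : 0 < T) : StrictMono (expProfileIntegral φ w T κ) := by
  intro a b hab
  have hlt : ∀ t ∈ Ioc 0 T,
      φ (Real.exp (-(κ * a) * t)) * w t < φ (Real.exp (-(κ * b) * t)) * w t :=
    fun t ht => mul_lt_mul_of_pos_right (hφ (Real.exp_pos _).le (Real.exp_pos _).le
      (Real.exp_lt_exp.2 (by nlinarith [mul_lt_mul_of_pos_left hab hκ, ht.1]))) (hw_pos t ht)
  exact intervalIntegral.integral_lt_integral_of_continuousOn_of_le_of_exists_lt hT
    (continuous_comp_exp_mul hφc hw κ a).continuousOn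
    (continuous_comp_exp_mul hφc hw κ b).continuousOn
    (fun t ht => (hlt t ht).le) ⟨T, right_mem_Icc.2 hT.le, hlt T (right_mem_Ioc.2 hT)⟩

theorem tendsto_expProfileIntegral_atTop (hφ : ContinuousOn φ (Ici 0)) (hw : Continuous w)
    (hκ : 0 < κ) (hT : 0 ≤ T) :
    Tendsto (expProfileIntegral φ w T κ) atTop (𝓝 (φ 0 * ∫ t in (0:ℝ)..T, w t)) := by
  rw [← intervalIntegral.integral_const_mul]
  refine tendsto_expProfileIntegral hφ hw hκ.le hT (eventually_ge_atTop 0) (fun _ _ => le_rfl)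
    fun t ht => Real.tendsto_exp_atBot.comp ?_
  simp only [neg_mul]
  exact tendsto_neg_atTop_atBot.comp ((tendsto_id.const_mul_atTop hκ).atTop_mul_const ht.1)

theorem tendsto_expProfileIntegral_nhdsGT_zero (hφ : ContinuousOn φ (Ici 0)) (hw : Continuous w)
    (hκ : 0 ≤ κ) (hT : 0 ≤ T) :
    Tendsto (expProfileIntegral φ w T κ) (𝓝[>] 0) (𝓝 (φ 1 * ∫ t in (0:ℝ)..T, w t)) := by
  rw [← intervalIntegral.integral_const_mul]
  refine tendsto_expProfileIntegral hφ hw hκ hT (eventually_mem_nhdsWithin.mono fun _ h => h.le)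
    (fun _ _ => zero_le_one) fun t _ => ?_
  have := (by fun_prop : Continuous fun lam => Real.exp (-(κ * lam) * t)).tendsto 0
  simpa using this.mono_left nhdsWithin_le_nhds

end ExpProfile

theorem continuousOn_div_one_add_mul_sq {F c : ℝ} (hc : 0 ≤ c) :
    ContinuousOn (fun x => (F / (1 + c * x)) ^ 2) (Ici 0) :=
  fun x hx => ((continuousAt_const.div (by fun_prop)
    (by nlinarith [mul_nonneg hc hx])).pow 2).continuousWithinAt

theorem strictAntiOn_div_one_add_mul_sq {F c : ℝ} (hF : 0 < F) (hc : 0 < c) :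
    StrictAntiOn (fun x => (F / (1 + c * x)) ^ 2) (Ici 0) := by
  intro x hx y hy hxy
  have hx' : 0 < 1 + c * x := by nlinarith [mul_nonneg hc.le hx]
  exact pow_lt_pow_left₀ (div_lt_div_of_pos_left hF hx' (by nlinarith))
    (div_pos hF (hx'.trans (by nlinarith))).le two_ne_zero

/-- The weighted energy integral `I(λ) = ∫₀^T (F_max/(1 + c e^{−γλF_max t}))² e^{−At} dt`
(with `c = F_max/f̄ − 1`) is continuous and strictly increasing in `λ > 0`, tends to
`F_max²(1 − e^{−AT})/A` as `λ → ∞` and to `f̄²(1 − e^{−AT})/A` as `λ → 0⁺`; hence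
any target `α` strictly between these values is achieved by a unique `λ > 0`. -/
theorem energy_multiplier_wellposed (γ Fmax fbar T A : ℝ)
    (hγ : 0 < γ) (hfbar : 0 < fbar) (hfF : fbar < Fmax) (hT : 0 < T) (hA : 0 < A)
    (I : ℝ → ℝ)
    (hI : ∀ lam : ℝ, I lam = ∫ t in (0:ℝ)..T,
      (Fmax / (1 + (Fmax / fbar - 1) * Real.exp (-(γ * lam * Fmax) * t))) ^ 2
        * Real.exp (-A * t)) :
    ContinuousOn I (Ioi 0) ∧
    StrictMonoOn I (Ioi 0) ∧
    Tendsto I atTop (nhds (Fmax ^ 2 * (1 - Real.exp (-A * T)) / A)) ∧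
    Tendsto I (nhdsWithin 0 (Ioi 0)) (nhds (fbar ^ 2 * (1 - Real.exp (-A * T)) / A)) ∧
    ∀ α : ℝ, fbar ^ 2 * (1 - Real.exp (-A * T)) / A < α →
      α < Fmax ^ 2 * (1 - Real.exp (-A * T)) / A →
      ∃! lam : ℝ, 0 < lam ∧ I lam = α := by
  have hF : 0 < Fmax := hfbar.trans hfF
  have hc : 0 < Fmax / fbar - 1 := sub_pos.2 ((one_lt_div hfbar).2 hfF)
  have hκ : 0 < γ * Fmax := mul_pos hγ hF
  have hφc := continuousOn_div_one_add_mul_sq (F := Fmax) hc.le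
  have hw : Continuous fun t => Real.exp (-A * t) := by fun_prop
  have hIJ : I = expProfileIntegral (fun x => (Fmax / (1 + (Fmax / fbar - 1) * x)) ^ 2)
      (fun t => Real.exp (-A * t)) T (γ * Fmax) := by
    funext lam
    rw [hI, expProfileIntegral, mul_right_comm γ lam Fmax]
  have hφ0 : (Fmax / (1 + (Fmax / fbar - 1) * 0)) ^ 2 = Fmax ^ 2 := by simp
  have hφ1 : (Fmax / (1 + (Fmax / fbar - 1) * 1)) ^ 2 = fbar ^ 2 := by
    rw [mul_one, add_sub_cancel, div_div_cancel₀ hF.ne']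
  have hcont := continuousOn_expProfileIntegral hφc hw hκ.le hT.le
  have hmono := strictMono_expProfileIntegral hφc (strictAntiOn_div_one_add_mul_sq hF hc) hw
    (fun t _ => Real.exp_pos (-A * t)) hκ hT
  have htop := tendsto_expProfileIntegral_atTop hφc hw hκ hT.le
  have hzero := tendsto_expProfileIntegral_nhdsGT_zero hφc hw hκ.le hT.le
  rw [integral_exp_neg_mul A T hA.ne', hφ0, ← mul_div_assoc] at htop
  rw [integral_exp_neg_mul A T hA.ne', hφ1, ← mul_div_assoc] at hzero
  rw [← hIJ] at hcont hmono htop hzero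
  exact ⟨hcont, hmono.strictMonoOn _, htop, hzero, fun α hα₁ hα₂ =>
    existsUnique_eq_of_strictMonoOn_of_tendsto hcont (hmono.strictMonoOn _) hzero htop hα₁ hα₂⟩
end
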